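/- arXiv:2309.00487 — 7 statements merged into one kernel-verified Lean document; each statement's English description precedes it below -/
import Mathlib

section
/- Let M̃(n) be the (n+1)×(n+1) matrix obtained from M(n) = (binomial(u+v,u))_{0≤u,v<n} by prepending the row (1, −1, 1, −1, …) of length n at the top and then prepending the column (0, −1, 1, −1, 1, …) of length n+1 at the left. Then det M̃(n) = (4^n − 1)/3 for all n ≥ 1. -/
/-- The bordered binomial matrix `M̃(n)`: entry `0` at `(0,0)`, `(-1)^(j+1)` at `(0,j)`
for `j ≥ 1`, `(-1)^i` at `(i,0)` for `i ≥ 1`, and `((i-1)+(j-1)).choose (i-1)` at `(i,j)`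
for `i, j ≥ 1`. -/
def Mtilde (n : ℕ) : Matrix (Fin (n + 1)) (Fin (n + 1)) ℤ :=
  Matrix.of fun i j =>
    if (i : ℕ) = 0 then (if (j : ℕ) = 0 then 0 else (-1) ^ ((j : ℕ) + 1))
    else if (j : ℕ) = 0 then (-1) ^ (i : ℕ)
    else ((((i : ℕ) - 1) + ((j : ℕ) - 1)).choose ((i : ℕ) - 1) : ℤ)

namespace MtildeProof

open Finset Matrix

/-! ### Scalar sum lemmas -/

lemma vand_nat (p q N : ℕ) (h : p < N) :
    ∑ k ∈ Finset.range N, p.choose k * q.choose k = (p + q).choose p := by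
  have htr : ∑ k ∈ Finset.range N, p.choose k * q.choose k
      = ∑ k ∈ Finset.range (p + 1), p.choose k * q.choose k := by
    refine (Finset.sum_subset (by intro x hx; simp at hx ⊢; omega) ?_).symm
    intro x _ hx
    simp only [Finset.mem_range, not_lt] at hx
    rw [Nat.choose_eq_zero_of_lt (by omega), Nat.zero_mul]
  rw [htr, Nat.add_choose_eq, Finset.Nat.sum_antidiagonal_eq_sum_range_succ_mk]
  have := Finset.sum_range_reflect (fun k => p.choose k * q.choose (p - k)) (p + 1)
  rw [← this]
  refine Finset.sum_congr rfl ?_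
  intro k hk
  simp only [Finset.mem_range] at hk
  have hk' : k ≤ p := by omega
  rw [Nat.add_sub_cancel, Nat.sub_sub_self hk', Nat.choose_symm hk']

lemma vand (p q N : ℕ) (h : p < N) :
    ∑ k ∈ Finset.range N, (p.choose k : ℤ) * (q.choose k : ℤ) = ((p + q).choose p : ℤ) := by
  have := vand_nat p q N h
  push_cast [← this]
  ring

lemma alt (m N : ℕ) (h : m < N) :
    ∑ k ∈ Finset.range N, (m.choose k : ℤ) * (-2) ^ k = (-1) ^ m := by
  have htr : ∑ k ∈ Finset.range N, (m.choose k : ℤ) * (-2) ^ k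
      = ∑ k ∈ Finset.range (m + 1), (m.choose k : ℤ) * (-2) ^ k := by
    refine (Finset.sum_subset (by intro x hx; simp at hx ⊢; omega) ?_).symm
    intro x _ hx
    simp only [Finset.mem_range, not_lt] at hx
    rw [Nat.choose_eq_zero_of_lt (by omega)]
    simp
  rw [htr]
  have := add_pow (-2 : ℤ) 1 m
  simp only [one_pow, mul_one] at this
  rw [show ((-1 : ℤ)) ^ m = (-2 + 1) ^ m by norm_num, this]
  refine Finset.sum_congr rfl fun k _ => by ring

/-! ### Entry functions -/

/-- geometric sum -/
def S (n : ℕ) : ℤ := ∑ k ∈ Finset.range n, 4 ^ k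

def fA (i j : ℕ) : ℤ :=
  if j = 0 then (if i = 0 then 1 else 0)
  else if i = 0 then 0 else ((i - 1).choose (j - 1) : ℤ)

def fB (i j : ℕ) : ℤ :=
  if i = 0 then (if j = 0 then 0 else (-2) ^ (j - 1))
  else if j = 0 then (-1) ^ i else ((i - 1).choose (j - 1) : ℤ)

def fC (i j : ℕ) : ℤ :=
  if i = 0 then (if j = 0 then 0 else (-2) ^ (j - 1))
  else if j = 0 then -(-2) ^ (i - 1)
  else if i = j then 1 else 0

def fU (n i j : ℕ) : ℤ :=
  if i = 0 then (if j = 0 then S n else (-2) ^ (j - 1))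
  else if i = j then 1 else 0

def fL (i j : ℕ) : ℤ :=
  if j = 0 then (if i = 0 then 1 else -(-2) ^ (i - 1))
  else if i = j then 1 else 0

/-! ### The three sum identities -/

lemma sum1 (n i j : ℕ) (hi : i ≤ n) (hj : j ≤ n) :
    ∑ k ∈ Finset.range (n + 1), fU n i k * fL k j = fC i j := by
  by_cases hi0 : i = 0
  · subst hi0
    by_cases hj0 : j = 0
    · subst hj0
      rw [Finset.sum_range_succ']
      have h1 : ∀ k ∈ Finset.range n, fU n 0 (k + 1) * fL (k + 1) 0 = -(4 : ℤ) ^ k := by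
        intro k _
        simp only [fU, fL, if_pos rfl, Nat.add_sub_cancel]
        norm_num
        rw [← mul_pow]
        norm_num
      rw [Finset.sum_congr rfl h1]
      simp [fU, fL, fC, S, Finset.sum_neg_distrib]
    · rw [Finset.sum_eq_single j]
      · simp [fU, fL, fC, hj0]
      · intro b _ hb
        simp [fL, hj0, hb]
      · intro hj'
        exact absurd (Finset.mem_range.mpr (by omega)) hj'
  · rw [Finset.sum_eq_single i]
    · simp [fU, fL, fC, hi0]
    · intro b _ hb
      have hib : i ≠ b := fun h => hb h.symm
      simp [fU, hi0, hib]
    · intro hi'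
      exact absurd (Finset.mem_range.mpr (by omega)) hi'

lemma sum2 (n i j : ℕ) (hi : i ≤ n) (hj : j ≤ n) :
    ∑ k ∈ Finset.range (n + 1), fA i k * fC k j = fB i j := by
  by_cases hi0 : i = 0
  · subst hi0
    rw [Finset.sum_eq_single 0]
    · simp [fA, fB, fC]
    · intro b _ hb
      simp [fA, hb]
    · simp
  · obtain ⟨i', rfl⟩ : ∃ i', i = i' + 1 := ⟨i - 1, by omega⟩
    by_cases hj0 : j = 0
    · subst hj0
      rw [Finset.sum_range_succ']
      have h1 : ∀ k ∈ Finset.range n, fA (i' + 1) (k + 1) * fC (k + 1) 0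
          = -((i'.choose k : ℤ) * (-2) ^ k) := by
        intro k _
        simp only [fA, fC, Nat.add_sub_cancel]
        norm_num
      rw [Finset.sum_congr rfl h1]
      rw [Finset.sum_neg_distrib, alt i' n (by omega)]
      simp [fA, fC, fB, pow_succ]
    · obtain ⟨j', rfl⟩ : ∃ j', j = j' + 1 := ⟨j - 1, by omega⟩
      rw [Finset.sum_range_succ']
      have h1 : ∀ k ∈ Finset.range n, fA (i' + 1) (k + 1) * fC (k + 1) (j' + 1)
          = (if k = j' then (i'.choose k : ℤ) else 0) := by
        intro k _
        simp only [fA, fC, Nat.add_sub_cancel]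
        by_cases hk : k = j' <;> norm_num [hk]
      rw [Finset.sum_congr rfl h1, Finset.sum_ite_eq' (Finset.range n) j'
        (fun k => (i'.choose k : ℤ))]
      rw [if_pos (Finset.mem_range.mpr (by omega : j' < n))]
      simp [fA, fB]

lemma sum3 (n i j : ℕ) (hi : i ≤ n) (hj : j ≤ n) :
    ∑ k ∈ Finset.range (n + 1), fB i k * fA j k =
      (if i = 0 then (if j = 0 then 0 else (-1 : ℤ) ^ (j + 1))
       else if j = 0 then (-1 : ℤ) ^ i
       else (((i - 1) + (j - 1)).choose (i - 1) : ℤ)) := by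
  by_cases hj0 : j = 0
  · subst hj0
    rw [Finset.sum_eq_single 0]
    · by_cases hi0 : i = 0 <;> simp [fA, fB, hi0]
    · intro b _ hb
      simp [fA, hb]
    · simp
  · obtain ⟨j', rfl⟩ : ∃ j', j = j' + 1 := ⟨j - 1, by omega⟩
    by_cases hi0 : i = 0
    · subst hi0
      rw [Finset.sum_range_succ']
      have h1 : ∀ k ∈ Finset.range n, fB 0 (k + 1) * fA (j' + 1) (k + 1)
          = (j'.choose k : ℤ) * (-2) ^ k := by
        intro k _
        simp only [fB, fA, Nat.add_sub_cancel]
        norm_num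
        ring
      rw [Finset.sum_congr rfl h1, alt j' n (by omega)]
      simp [fB, fA, pow_succ]
    · obtain ⟨i', rfl⟩ : ∃ i', i = i' + 1 := ⟨i - 1, by omega⟩
      rw [Finset.sum_range_succ']
      have h1 : ∀ k ∈ Finset.range n, fB (i' + 1) (k + 1) * fA (j' + 1) (k + 1)
          = (i'.choose k : ℤ) * (j'.choose k : ℤ) := by
        intro k _
        simp only [fB, fA, Nat.add_sub_cancel]
        norm_num
      rw [Finset.sum_congr rfl h1, vand i' j' n (by omega)]
      simp [fB, fA]

/-! ### Matrices -/

def Amat (n : ℕ) : Matrix (Fin (n + 1)) (Fin (n + 1)) ℤ :=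
  Matrix.of fun i j => fA (i : ℕ) (j : ℕ)

def Bmat (n : ℕ) : Matrix (Fin (n + 1)) (Fin (n + 1)) ℤ :=
  Matrix.of fun i j => fB (i : ℕ) (j : ℕ)

def Cmat (n : ℕ) : Matrix (Fin (n + 1)) (Fin (n + 1)) ℤ :=
  Matrix.of fun i j => fC (i : ℕ) (j : ℕ)

def Umat (n : ℕ) : Matrix (Fin (n + 1)) (Fin (n + 1)) ℤ :=
  Matrix.of fun i j => fU n (i : ℕ) (j : ℕ)

def Lmat (n : ℕ) : Matrix (Fin (n + 1)) (Fin (n + 1)) ℤ :=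
  Matrix.of fun i j => fL (i : ℕ) (j : ℕ)

lemma mul_UL (n : ℕ) : Umat n * Lmat n = Cmat n := by
  ext i j
  rw [Matrix.mul_apply]
  show ∑ k : Fin (n + 1), fU n (i : ℕ) (k : ℕ) * fL (k : ℕ) (j : ℕ) = fC (i : ℕ) (j : ℕ)
  rw [Fin.sum_univ_eq_sum_range (fun k => fU n (i : ℕ) k * fL k (j : ℕ))]
  exact sum1 n i j (Nat.lt_succ_iff.mp i.isLt) (Nat.lt_succ_iff.mp j.isLt)

lemma mul_AC (n : ℕ) : Amat n * Cmat n = Bmat n := by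
  ext i j
  rw [Matrix.mul_apply]
  show ∑ k : Fin (n + 1), fA (i : ℕ) (k : ℕ) * fC (k : ℕ) (j : ℕ) = fB (i : ℕ) (j : ℕ)
  rw [Fin.sum_univ_eq_sum_range (fun k => fA (i : ℕ) k * fC k (j : ℕ))]
  exact sum2 n i j (Nat.lt_succ_iff.mp i.isLt) (Nat.lt_succ_iff.mp j.isLt)

lemma mul_BA (n : ℕ) : Bmat n * (Amat n)ᵀ = Mtilde n := by
  ext i j
  rw [Matrix.mul_apply]
  show ∑ k : Fin (n + 1), fB (i : ℕ) (k : ℕ) * fA (j : ℕ) (k : ℕ) = Mtilde n i j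
  rw [Fin.sum_univ_eq_sum_range (fun k => fB (i : ℕ) k * fA (j : ℕ) k)]
  exact sum3 n i j (Nat.lt_succ_iff.mp i.isLt) (Nat.lt_succ_iff.mp j.isLt)

lemma factorization (n : ℕ) : Mtilde n = Amat n * (Umat n * Lmat n) * (Amat n)ᵀ := by
  rw [mul_UL, mul_AC, mul_BA]

/-! ### Determinants -/

lemma fin_lt {m : ℕ} {i j : Fin m} (h : i < j) : (i : ℕ) < (j : ℕ) := h

lemma det_Amat (n : ℕ) : (Amat n).det = 1 := by
  rw [Matrix.det_of_lowerTriangular (Amat n) ?ht]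
  case ht =>
    intro i j h
    have hij : (i : ℕ) < (j : ℕ) := fin_lt (OrderDual.toDual_lt_toDual.mp h)
    show fA (i : ℕ) (j : ℕ) = 0
    unfold fA
    rw [if_neg (by omega)]
    by_cases hi0 : (i : ℕ) = 0
    · simp [hi0]
    · rw [if_neg hi0, Nat.choose_eq_zero_of_lt (by omega)]
      simp
  refine Finset.prod_eq_one fun i _ => ?_
  show fA (i : ℕ) (i : ℕ) = 1
  unfold fA
  by_cases hi0 : (i : ℕ) = 0
  · simp [hi0]
  · rw [if_neg hi0, if_neg hi0, Nat.choose_self]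
    simp

lemma det_Lmat (n : ℕ) : (Lmat n).det = 1 := by
  rw [Matrix.det_of_lowerTriangular (Lmat n) ?ht]
  case ht =>
    intro i j h
    have hij : (i : ℕ) < (j : ℕ) := fin_lt (OrderDual.toDual_lt_toDual.mp h)
    show fL (i : ℕ) (j : ℕ) = 0
    unfold fL
    rw [if_neg (by omega), if_neg (by omega)]
  refine Finset.prod_eq_one fun i _ => ?_
  show fL (i : ℕ) (i : ℕ) = 1
  unfold fL
  by_cases hi0 : (i : ℕ) = 0 <;> simp [hi0]

lemma det_Umat (n : ℕ) : (Umat n).det = S n := by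
  rw [Matrix.det_of_upperTriangular ?ht]
  case ht =>
    intro i j h
    have hij : (j : ℕ) < (i : ℕ) := fin_lt h
    show fU n (i : ℕ) (j : ℕ) = 0
    unfold fU
    rw [if_neg (by omega), if_neg (by omega)]
  rw [Fin.prod_univ_succ]
  have h1 : ∀ i : Fin n, (Umat n) i.succ i.succ = 1 := by
    intro i
    show fU n (i.succ : ℕ) (i.succ : ℕ) = 1
    unfold fU
    rw [if_neg (by simp), if_pos rfl]
  simp only [h1]
  show fU n 0 0 * _ = S n
  simp [fU]

end MtildeProof

/-- `det M̃(n) = (4^n - 1)/3` for all `n ≥ 1`. -/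
theorem det_Mtilde (n : ℕ) (hn : 1 ≤ n) : (Mtilde n).det = (4 ^ n - 1) / 3 := by
  have h3 : MtildeProof.S n * 3 = 4 ^ n - 1 := by
    have := geom_sum_mul (4 : ℤ) n
    norm_num at this
    simpa [MtildeProof.S] using this
  rw [MtildeProof.factorization n, Matrix.det_mul, Matrix.det_mul, Matrix.det_mul,
    Matrix.det_transpose, MtildeProof.det_Amat, MtildeProof.det_Umat, MtildeProof.det_Lmat,
    ← h3, Int.mul_ediv_cancel _ (by norm_num)]
  ring
end

section
/- With M̃(n) as defined, det M̃(n) = 4·det M̃(n−1) + 1 for all n ≥ 2. -/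
open Matrix Finset

theorem Nat.sum_range_choose_mul_choose (i j : ℕ) :
    ∑ k ∈ range (i + 1), i.choose k * j.choose k = (i + j).choose i := by
  rw [add_comm i j, Nat.add_choose_eq, Nat.sum_antidiagonal_eq_sum_range_succ_mk]
  refine sum_congr rfl fun k hk => ?_
  rw [mul_comm, Nat.choose_symm (Nat.lt_succ_iff.1 (mem_range.1 hk))]

theorem sum_range_choose_mul_neg_two_pow {R : Type*} [CommRing R] (i : ℕ) :
    ∑ k ∈ range (i + 1), (i.choose k : R) * (-2) ^ k = (-1) ^ i := by
  rw [show (-1 : R) = -2 + 1 by norm_num, add_pow]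
  simp [mul_comm]

theorem Fin.sum_univ_choose_mul_eq_sum_range {R : Type*} [NonAssocSemiring R] {n : ℕ} (i : Fin n)
    (f : ℕ → R) :
    ∑ k : Fin n, ((i : ℕ).choose k : R) * f k =
      ∑ k ∈ range (i + 1), ((i : ℕ).choose k : R) * f k := by
  rw [Fin.sum_univ_eq_sum_range (fun k => ((i : ℕ).choose k : R) * f k)]
  refine (sum_subset (range_subset_range.2 i.isLt) fun k _ hk => ?_).symm
  rw [Nat.choose_eq_zero_of_lt (by simpa using hk), Nat.cast_zero, zero_mul]

namespace Matrix

variable (R : Type*) (n : ℕ)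

def lowerPascal [NatCast R] : Matrix (Fin n) (Fin n) R :=
  of fun i j => ((i : ℕ).choose j : R)

def symmetricPascal [NatCast R] : Matrix (Fin n) (Fin n) R :=
  of fun i j => (((i : ℕ) + j).choose i : R)

variable {R n}

theorem lowerPascal_mul_transpose [NonAssocSemiring R] :
    lowerPascal R n * (lowerPascal R n)ᵀ = symmetricPascal R n := by
  ext i j
  simp only [mul_apply, lowerPascal, symmetricPascal, transpose_apply, of_apply]
  rw [Fin.sum_univ_choose_mul_eq_sum_range i fun k => (j.val.choose k : R),
    ← Nat.sum_range_choose_mul_choose]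
  push_cast
  rfl

theorem det_lowerPascal [CommRing R] : (lowerPascal R n).det = 1 := by
  rw [det_of_isLowerTriangular]
  · simp [lowerPascal]
  · intro i j hij
    simp [lowerPascal, Nat.choose_eq_zero_of_lt (show (i : ℕ) < j from hij)]

theorem lowerPascal_mulVec_neg_two_pow [CommRing R] :
    lowerPascal R n *ᵥ (fun k => (-2) ^ (k : ℕ)) = fun i : Fin n => (-1 : R) ^ (i : ℕ) := by
  ext i
  rw [mulVec, dotProduct]
  exact (Fin.sum_univ_choose_mul_eq_sum_range i fun k => (-2 : R) ^ k).trans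
    (sum_range_choose_mul_neg_two_pow i)

theorem det_fromBlocks_one_replicateCol_replicateRow_zero {ι : Type*} [Fintype ι]
    [DecidableEq ι] [CommRing R] (v w : ι → R) :
    (fromBlocks 1 (replicateCol Unit w) (replicateRow Unit v) 0).det = -(v ⬝ᵥ w) := by
  simp [det_unique]

theorem fromBlocks_congr_mul_transpose {ι : Type*} [Fintype ι] [DecidableEq ι] [CommSemiring R]
    (L : Matrix ι ι R) (v w : ι → R) :
    fromBlocks L 0 0 1 * fromBlocks 1 (replicateCol Unit w) (replicateRow Unit v) 0 *
        (fromBlocks L 0 0 (1 : Matrix Unit Unit R))ᵀ =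
      fromBlocks (L * Lᵀ) (replicateCol Unit (L *ᵥ w)) (replicateRow Unit (L *ᵥ v)) 0 := by
  rw [fromBlocks_transpose, fromBlocks_multiply, fromBlocks_multiply, replicateCol_mulVec,
    ← vecMul_transpose, replicateRow_vecMul]
  simp

end Matrix

def finSuccEquivSumUnit (n : ℕ) : Fin (n + 1) ≃ Fin n ⊕ Unit :=
  (finSuccEquiv n).trans (Equiv.optionEquivSumPUnit (Fin n))

theorem Mtilde_eq_submatrix_fromBlocks (n : ℕ) :
    Mtilde n = (fromBlocks (symmetricPascal ℤ n) (replicateCol Unit fun i => -(-1) ^ (i : ℕ))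
      (replicateRow Unit fun j => (-1) ^ (j : ℕ)) 0).submatrix
        (finSuccEquivSumUnit n) (finSuccEquivSumUnit n) := by
  ext i j
  induction i using Fin.cases <;> induction j using Fin.cases <;>
    simp [Mtilde, symmetricPascal, finSuccEquivSumUnit, pow_succ]

theorem det_Mtilde_s8 (n : ℕ) : (Mtilde n).det = ∑ k ∈ range n, 4 ^ k := by
  set v : Fin n → ℤ := fun k => (-2) ^ (k : ℕ)
  have hM : Mtilde n = (fromBlocks (lowerPascal ℤ n) 0 0 1 *
      fromBlocks 1 (replicateCol Unit (-v)) (replicateRow Unit v) 0 *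
        (fromBlocks (lowerPascal ℤ n) 0 0 1)ᵀ).submatrix
          (finSuccEquivSumUnit n) (finSuccEquivSumUnit n) := by
    rw [fromBlocks_congr_mul_transpose, lowerPascal_mul_transpose, mulVec_neg,
      lowerPascal_mulVec_neg_two_pow]
    exact Mtilde_eq_submatrix_fromBlocks n
  rw [hM, det_submatrix_equiv_self, det_mul, det_mul, det_transpose, det_fromBlocks_zero₁₂,
    det_lowerPascal, det_one, det_fromBlocks_one_replicateCol_replicateRow_zero]
  simp [dotProduct, v, ← mul_pow, Fin.sum_univ_eq_sum_range (fun k => (4 : ℤ) ^ k)]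

/-- `det M̃(n) = 4 * det M̃(n-1) + 1` for all `n ≥ 2`. -/
theorem det_Mtilde_recurrence (n : ℕ) (hn : 2 ≤ n) :
    (Mtilde n).det = 4 * (Mtilde (n - 1)).det + 1 := by
  obtain ⟨m, rfl⟩ : ∃ m, n = m + 1 := ⟨n - 1, by omega⟩
  rw [det_Mtilde_s8, det_Mtilde_s8, Nat.add_sub_cancel, sum_range_succ', mul_sum]
  simp [pow_succ']
end

section
/- For every n ≥ 1 and every i with 0 ≤ i ≤ n−1, the minor Δ(n)_i^{n−1} of the binomial matrix M(n) obtained by deleting row i and the last column satisfies Δ(n)_i^{n−1} = binomial(n−1, i). -/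
open Finset Matrix

/-- The binomial matrix with entry `(u+v).choose u`. -/
def M (n : ℕ) : Matrix (Fin n) (Fin n) ℤ :=
  Matrix.of fun u v => (((u : ℕ) + (v : ℕ)).choose (u : ℕ) : ℤ)

lemma sumA (N u w : ℕ) (hu : u < N) :
    ∑ k ∈ range N, u.choose k * w.choose k = (u + w).choose u := by
  have h1 : ∑ k ∈ range N, u.choose k * w.choose k
      = ∑ k ∈ range (u+1), u.choose k * w.choose k := by
    refine (Finset.sum_subset (Finset.range_subset_range.mpr hu) ?_).symm
    intro k _ hk
    rw [Finset.mem_range, Nat.lt_succ_iff, not_le] at hk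
    rw [Nat.choose_eq_zero_of_lt hk, Nat.zero_mul]
  have h2 : ∑ k ∈ range (u+1), u.choose k * w.choose k
      = ∑ j ∈ range (u+1), u.choose (u+1-1-j) * w.choose (u - (u+1-1-j)) := by
    apply Finset.sum_congr rfl
    intro j hj
    rw [Finset.mem_range, Nat.lt_succ_iff] at hj
    rw [show u+1-1-j = u - j by omega, Nat.choose_symm hj, Nat.sub_sub_self hj]
  rw [h1, h2, Finset.sum_range_reflect (fun j => u.choose j * w.choose (u - j)) (u+1),
    Nat.add_choose_eq, Finset.Nat.sum_antidiagonal_eq_sum_range_succ_mk]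

lemma sumB (N u v : ℕ) (hu : u < N) :
    ∑ k ∈ range N, (u.choose k : ℤ) * ((-1)^(k+v) * (k.choose v : ℤ)) =
      if u = v then 1 else 0 := by
  rcases le_or_gt v u with hvu | huv
  · have hsub : Finset.Ico v (u+1) ⊆ range N := by
      intro k hk; rw [Finset.mem_Ico] at hk; rw [Finset.mem_range]; omega
    rw [← Finset.sum_subset hsub]
    · rw [Finset.sum_Ico_eq_sum_range]
      have : ∀ j ∈ range (u + 1 - v), (u.choose (v+j) : ℤ) * ((-1)^(v+j+v) * ((v+j).choose v : ℤ))
          = (u.choose v : ℤ) * ((-1)^j * ((u-v).choose j : ℤ)) := by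
        intro j hj
        rw [Finset.mem_range] at hj
        have h1 : v + j ≤ u := by omega
        have h2 : v ≤ v + j := Nat.le_add_right v j
        have key : u.choose (v+j) * (v+j).choose v = u.choose v * (u-v).choose ((v+j)-v) :=
          Nat.choose_mul h2
        rw [Nat.add_sub_cancel_left] at key
        have hsgn : ((-1:ℤ))^(v+j+v) = (-1)^j := by
          rw [show v+j+v = j + 2*v by ring, pow_add, pow_mul]; simp
        have keyZ : ((u.choose (v+j)):ℤ) * ((v+j).choose v) = (u.choose v) * ((u-v).choose j) := by
          exact_mod_cast congrArg (Nat.cast : ℕ → ℤ) key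
        rw [hsgn]
        linear_combination ((-1:ℤ)^j) * keyZ
      rw [Finset.sum_congr rfl this]
      have hr : u + 1 - v = (u - v) + 1 := by omega
      rw [hr, ← Finset.mul_sum, Int.alternating_sum_range_choose]
      rcases eq_or_ne u v with h | h
      · simp [h]
      · have : u - v ≠ 0 := by omega
        simp [h, this]
    · intro k hk hk2
      rw [Finset.mem_Ico, not_and_or, not_le, not_lt] at hk2
      rcases hk2 with h | h
      · rw [Nat.choose_eq_zero_of_lt h]; push_cast; ring
      · rw [Nat.choose_eq_zero_of_lt (by omega : u < k)]; push_cast; ring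
  · have : ∀ k ∈ range N, (u.choose k : ℤ) * ((-1)^(k+v) * (k.choose v : ℤ)) = 0 := by
      intro k _
      rcases lt_or_ge k v with h | h
      · rw [Nat.choose_eq_zero_of_lt h]; push_cast; ring
      · rw [Nat.choose_eq_zero_of_lt (by omega : u < k)]; push_cast; ring
    rw [Finset.sum_congr rfl this, Finset.sum_const_zero]
    rw [if_neg (by omega)]

/-- Lower-triangular Pascal matrix. -/
def Lmat (n : ℕ) : Matrix (Fin n) (Fin n) ℤ :=
  Matrix.of fun u v => ((u : ℕ).choose (v : ℕ) : ℤ)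

/-- Its inverse. -/
def Lmat' (n : ℕ) : Matrix (Fin n) (Fin n) ℤ :=
  Matrix.of fun u v => (-1)^((u:ℕ)+(v:ℕ)) * ((u : ℕ).choose (v : ℕ) : ℤ)

lemma M_eq (n : ℕ) : M n = Lmat n * (Lmat n)ᵀ := by
  ext u v
  simp only [M, Lmat, Matrix.mul_apply, Matrix.transpose_apply, Matrix.of_apply]
  rw [Fin.sum_univ_eq_sum_range (fun k => (((u:ℕ).choose k : ℤ)) * ((v:ℕ).choose k : ℤ)) n]
  rw [← sumA n (u:ℕ) (v:ℕ) u.isLt]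
  push_cast
  rfl

lemma LL' (n : ℕ) : Lmat n * Lmat' n = 1 := by
  ext u v
  simp only [Lmat, Lmat', Matrix.mul_apply, Matrix.of_apply, Matrix.one_apply]
  rw [Fin.sum_univ_eq_sum_range
    (fun k => ((u:ℕ).choose k : ℤ) * ((-1)^(k+(v:ℕ)) * ((k).choose (v:ℕ) : ℤ))) n]
  rw [sumB n (u:ℕ) (v:ℕ) u.isLt]
  simp [Fin.ext_iff]

lemma MB (n : ℕ) : M n * ((Lmat' n)ᵀ * Lmat' n) = 1 := by
  have h' : Lmat' n * Lmat n = 1 := mul_eq_one_comm.mp (LL' n)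
  rw [M_eq n]
  calc Lmat n * (Lmat n)ᵀ * ((Lmat' n)ᵀ * Lmat' n)
      = Lmat n * (((Lmat n)ᵀ * (Lmat' n)ᵀ) * Lmat' n) := by
        rw [Matrix.mul_assoc, Matrix.mul_assoc]
    _ = Lmat n * ((Lmat' n * Lmat n)ᵀ * Lmat' n) := by rw [Matrix.transpose_mul]
    _ = Lmat n * Lmat' n := by rw [h', Matrix.transpose_one, Matrix.one_mul]
    _ = 1 := LL' n

lemma detL (n : ℕ) : (Lmat n).det = 1 := by
  have h : (Lmat n).BlockTriangular OrderDual.toDual := by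
    intro u v huv
    simp only [OrderDual.toDual_lt_toDual] at huv
    simp only [Lmat, Matrix.of_apply]
    rw [Nat.choose_eq_zero_of_lt huv]
    norm_num
  rw [Matrix.det_of_lowerTriangular _ h]
  simp [Lmat]

lemma detM (n : ℕ) : (M n).det = 1 := by
  rw [M_eq n, Matrix.det_mul, Matrix.det_transpose, detL]; ring

lemma adjM (n : ℕ) : (M n).adjugate = (Lmat' n)ᵀ * Lmat' n := by
  calc (M n).adjugate = (M n).adjugate * (M n * ((Lmat' n)ᵀ * Lmat' n)) := by rw [MB]; simp
    _ = ((M n).adjugate * M n) * ((Lmat' n)ᵀ * Lmat' n) := by rw [Matrix.mul_assoc]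
    _ = (Lmat' n)ᵀ * Lmat' n := by
        rw [Matrix.adjugate_mul, detM]; simp

/-- The minor of `M(n+1)` obtained by deleting row `i` and the last column equals
`n.choose i`. -/
theorem minor_last_column (n : ℕ) (i : Fin (n + 1)) :
    ((M (n + 1)).submatrix i.succAbove (Fin.last n).succAbove).det = (n.choose (i : ℕ) : ℤ) := by
  have e1 := Matrix.adjugate_fin_succ_eq_det_submatrix (M (n+1)) (Fin.last n) i
  have e2 : (M (n+1)).adjugate (Fin.last n) i = (-1)^((i:ℕ)+n) * (n.choose (i:ℕ) : ℤ) := by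
    rw [adjM]
    simp only [Matrix.mul_apply, Matrix.transpose_apply, Lmat', Matrix.of_apply]
    rw [Fintype.sum_eq_single (Fin.last n)]
    · simp only [Fin.val_last]
      rw [show ((-1:ℤ))^(n+n) = 1 by rw [← two_mul, pow_mul]; norm_num]
      simp [add_comm]
    · intro k hk
      have hk' : (k:ℕ) < n := by
        have := k.isLt
        have : (k:ℕ) ≠ n := fun h => hk (Fin.ext (by simp [h]))
        omega
      rw [Fin.val_last, Nat.choose_eq_zero_of_lt hk']
      push_cast; ring
  rw [e2] at e1
  have hne : ((-1:ℤ))^((i:ℕ)+n) ≠ 0 := pow_ne_zero _ (by norm_num)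
  apply mul_left_cancel₀ hne
  simp only [Fin.val_last] at e1
  exact e1.symm
end

section
/- Dodgson's identity: for every n×n matrix A over a commutative ring and indices i, j with 0 ≤ i, j ≤ n−2, det(A)·det(A_{i,n−1}^{j,n−1}) = det(A_i^j)·det(A_{n−1}^{n−1}) − det(A_i^{n−1})·det(A_{n−1}^j), where subscripts denote deleted rows and superscripts deleted columns. -/
/-!
Let `C` be the identity matrix with its columns `j` and `last` replaced by the columns `i` and
`last` of `adjugate A`. Then `A * C` is `A` with those two columns replaced by `det A • e_i` and
`det A • e_last`, while `det C` is a `2 × 2` minor of the adjugate. Expanding both determinants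
along the replaced columns gives `det A` times the identity. For the generic matrix over
`ℤ[x_kl]` the factor `det A ≠ 0` cancels, and the identity then specializes to every `A`.
-/

open Matrix

namespace Matrix

variable {n R : Type*} [Fintype n] [DecidableEq n] [CommRing R]

theorem det_one_updateCol_updateCol {p q : n} (hpq : p ≠ q) (x y : n → R) :
    (((1 : Matrix n n R).updateCol p x).updateCol q y).det = x p * y q - x q * y p := by
  let U : Matrix n (Fin 2) R := (of ![x - Pi.single p 1, y - Pi.single q 1])ᵀ
  let V : Matrix (Fin 2) n R := of ![Pi.single p 1, Pi.single q 1]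
  have hUV : ((1 : Matrix n n R).updateCol p x).updateCol q y = 1 + U * V := by
    ext k c
    rcases eq_or_ne c q with rfl | hcq
    · simp [U, V, mul_apply, hpq, one_apply, Pi.single_apply, eq_comm]
    rcases eq_or_ne c p with rfl | hcp
    · simp [U, V, mul_apply, hcq, one_apply, Pi.single_apply, eq_comm]
    simp [U, V, mul_apply, hcq, hcp, Pi.single_apply]
  rw [hUV, det_one_add_mul_comm, det_fin_two]
  simp [U, V, hpq, Ne.symm hpq]
  ring

/-- Since `(A.updateCol p (Pi.single r 1)).det = adjugate A p r`, this is Jacobi's theorem on a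
`2 × 2` minor of the adjugate, multiplied by `det A`. -/
theorem det_mul_det_updateCol_single_sub {p q : n} (hpq : p ≠ q) (A : Matrix n n R) (r s : n) :
    A.det * ((A.updateCol p (Pi.single r 1)).det * (A.updateCol q (Pi.single s 1)).det -
        (A.updateCol q (Pi.single r 1)).det * (A.updateCol p (Pi.single s 1)).det) =
      A.det ^ 2 * ((A.updateCol p (Pi.single r 1)).updateCol q (Pi.single s 1)).det := by
  have hAC : A * ((1 : Matrix n n R).updateCol p (A.cramer (Pi.single r 1))).updateCol q
      (A.cramer (Pi.single s 1)) =
      (A.updateCol p (A.det • Pi.single r 1)).updateCol q (A.det • Pi.single s 1) := by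
    rw [mul_updateCol, mul_updateCol, mul_one, mulVec_cramer, mulVec_cramer]
  have hdet := congrArg det hAC
  rw [det_mul, det_one_updateCol_updateCol hpq, det_updateCol_smul, updateCol_comm _ hpq,
    det_updateCol_smul, updateCol_comm _ hpq.symm] at hdet
  simp only [cramer_apply] at hdet
  rw [hdet]
  ring

theorem det_updateCol_single {m : ℕ} (B : Matrix (Fin (m + 1)) (Fin (m + 1)) R)
    (r c : Fin (m + 1)) :
    (B.updateCol c (Pi.single r 1)).det =
      (-1) ^ (r + c : ℕ) * (B.submatrix r.succAbove c.succAbove).det := by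
  rw [det_succ_column _ c, Fintype.sum_eq_single r fun k hk => by simp [Pi.single_eq_of_ne hk]]
  simp

theorem submatrix_castSucc_updateCol_single {α : Type*} [Zero α] [One α] {m : ℕ}
    (B : Matrix (Fin (m + 1)) (Fin (m + 1)) α) (r c : Fin m) :
    (B.updateCol c.castSucc (Pi.single r.castSucc 1)).submatrix Fin.castSucc Fin.castSucc =
      (B.submatrix Fin.castSucc Fin.castSucc).updateCol c (Pi.single r 1) := by
  ext k l
  simp [updateCol_apply, Pi.single_apply]

end Matrix

theorem det_mul_dodgson_identity {R : Type*} [CommRing R] (n : ℕ)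
    (A : Matrix (Fin (n + 2)) (Fin (n + 2)) R) (i j : Fin (n + 1)) :
    A.det * (A.det *
        ((A.submatrix Fin.castSucc Fin.castSucc).submatrix i.succAbove j.succAbove).det) =
      A.det * ((A.submatrix i.castSucc.succAbove j.castSucc.succAbove).det *
          (A.submatrix Fin.castSucc Fin.castSucc).det -
        (A.submatrix i.castSucc.succAbove Fin.castSucc).det *
          (A.submatrix Fin.castSucc j.castSucc.succAbove).det) := by
  have h := det_mul_det_updateCol_single_sub (Fin.castSucc_lt_last j).ne A i.castSucc (Fin.last _)
  simp only [det_updateCol_single, Fin.succAbove_last, submatrix_castSucc_updateCol_single,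
    Fin.val_last, Fin.val_castSucc] at h
  -- after normalisation every remaining sign is an even power of `-1`
  linear_combination (norm := ring_nf) -(-1 : R) ^ (i + j : ℕ) * h
  simp [pow_mul']

/-- Dodgson's identity: for an `(n+2) × (n+2)` matrix `A` over a commutative ring and
indices `i, j ≤ n` (i.e. not the last row/column),
`det A * det A_{i,last}^{j,last} = det A_i^j * det A_{last}^{last} - det A_i^{last} * det A_{last}^j`,
where subscripts denote deleted rows and superscripts deleted columns. -/
theorem dodgson_identity {R : Type*} [CommRing R] (n : ℕ)
    (A : Matrix (Fin (n + 2)) (Fin (n + 2)) R) (i j : Fin (n + 1)) :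
    A.det * ((A.submatrix Fin.castSucc Fin.castSucc).submatrix i.succAbove j.succAbove).det =
      (A.submatrix i.castSucc.succAbove j.castSucc.succAbove).det *
          (A.submatrix Fin.castSucc Fin.castSucc).det -
        (A.submatrix i.castSucc.succAbove Fin.castSucc).det *
          (A.submatrix Fin.castSucc j.castSucc.succAbove).det := by
  let X := mvPolynomialX (Fin (n + 2)) (Fin (n + 2)) ℤ
  have hX := mul_left_cancel₀ (det_mvPolynomialX_ne_zero _ ℤ) (det_mul_dodgson_identity n X i j)
  let φ := MvPolynomial.eval₂Hom (Int.castRingHom R) fun p : Fin (n + 2) × Fin (n + 2) => A p.1 p.2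
  have hφX : X.map φ = A := mvPolynomialX_map_eval₂ _ A
  simpa only [map_mul, map_sub, RingHom.map_det, RingHom.mapMatrix_apply, ← submatrix_map, hφX]
    using congrArg φ hX
end

section
/- For the binomial matrix M(n) with det M(n) = 1, the minors satisfy the recursion Δ(n)_i^j = Δ(n−1)_i^j + binomial(n−1,i)·binomial(n−1,j) for all 0 ≤ i, j ≤ n−2. -/
/-!
By Vandermonde's identity `M(n) = L Lᵀ`, where `L` is the lower-triangular Pascal matrix,
and `L` is unipotent with inverse the signed Pascal matrix `L'`. Hence `adj M(n) = L'ᵀ L'`, and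
reading the minors off the adjugate gives the closed form `Δ(n)_i^j = ∑_{k<n} C(k,i) C(k,j)`,
whose last summand is the correction term of the recursion.
-/

open Finset Matrix

lemma sum_range_choose_mul_of_lt {R : Type*} [NonAssocSemiring R] {u n : ℕ} (hu : u < n)
    (f : ℕ → R) :
    ∑ k ∈ range n, (u.choose k : R) * f k =
      ∑ k ∈ range (u + 1), (u.choose k : R) * f k := by
  refine (sum_subset (range_subset_range.2 hu) fun k _ hk => ?_).symm
  rw [Nat.choose_eq_zero_of_lt (by simpa using hk), Nat.cast_zero, zero_mul]

lemma sum_range_choose_mul_choose {R : Type*} [NonAssocSemiring R] {u n : ℕ} (v : ℕ)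
    (hu : u < n) :
    ∑ k ∈ range n, (u.choose k : R) * v.choose k = ((u + v).choose u : R) := by
  rw [sum_range_choose_mul_of_lt hu, add_comm u v, Nat.add_choose_eq,
    Nat.sum_antidiagonal_eq_sum_range_succ (fun a b => v.choose a * u.choose b), Nat.cast_sum]
  refine sum_congr rfl fun k hk => ?_
  rw [Nat.choose_symm (Nat.lt_succ_iff.1 (mem_range.1 hk)), Nat.cast_mul, Nat.cast_comm]

lemma sum_range_choose_mul_neg_one_pow_mul_choose (u v : ℕ) :
    ∑ k ∈ range (u + 1), (u.choose k : ℤ) * ((-1) ^ (k + v) * k.choose v) =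
      if u = v then 1 else 0 := by
  rcases lt_or_ge u v with huv | hvu
  · rw [if_neg huv.ne]
    refine sum_eq_zero fun k hk => ?_
    have hkv : k < v := by have := mem_range.1 hk; omega
    rw [Nat.choose_eq_zero_of_lt hkv, Nat.cast_zero, mul_zero, mul_zero]
  obtain ⟨w, rfl⟩ := Nat.exists_eq_add_of_le hvu
  have hlow : ∑ k ∈ range v, ((v + w).choose k : ℤ) * ((-1) ^ (k + v) * k.choose v) = 0 :=
    sum_eq_zero fun k hk => by
      rw [Nat.choose_eq_zero_of_lt (mem_range.1 hk), Nat.cast_zero, mul_zero, mul_zero]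
  have hhigh (j : ℕ) : ((v + w).choose (v + j) : ℤ) * ((-1) ^ (v + j + v) * (v + j).choose v) =
      (v + w).choose v * ((-1) ^ j * w.choose j) := by
    have h := congrArg (Nat.cast : ℕ → ℤ) (Nat.choose_mul (n := v + w) (Nat.le_add_right v j))
    simp only [Nat.add_sub_cancel_left, Nat.cast_mul] at h
    rw [show v + j + v = j + 2 * v by ring, pow_add, pow_mul, neg_one_sq, one_pow, mul_one]
    linear_combination (-1) ^ j * h
  rw [add_assoc, sum_range_add, hlow, zero_add, sum_congr rfl fun j _ => hhigh j, ← mul_sum,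
    Int.alternating_sum_range_choose]
  by_cases hw : w = 0 <;> simp [hw]

def pascal (R : Type*) [NatCast R] (n : ℕ) : Matrix (Fin n) (Fin n) R :=
  of fun u v => ((u : ℕ).choose v : R)

def signedPascal (R : Type*) [Ring R] (n : ℕ) : Matrix (Fin n) (Fin n) R :=
  of fun u v => (-1) ^ ((u : ℕ) + v) * ((u : ℕ).choose v : R)

lemma pascal_mul_signedPascal {R : Type*} [Ring R] (n : ℕ) :
    pascal R n * signedPascal R n = 1 := by
  ext u v
  have h := congrArg (Int.cast : ℤ → R) (sum_range_choose_mul_neg_one_pow_mul_choose u v)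
  push_cast at h
  rw [← sum_range_choose_mul_of_lt u.isLt, ← Fin.sum_univ_eq_sum_range
    (fun k => ((u : ℕ).choose k : R) * ((-1) ^ (k + (v : ℕ)) * (k.choose v : R)))] at h
  simpa [pascal, signedPascal, mul_apply, one_apply, Fin.ext_iff] using h

section CommRing

variable {R : Type*} [CommRing R]

lemma det_pascal (n : ℕ) : (pascal R n).det = 1 := by
  rw [det_of_isLowerTriangular _ fun u v huv => ?_]
  · simp [pascal]
  · simp [pascal, Nat.choose_eq_zero_of_lt (show (u : ℕ) < v from huv)]

lemma adjugate_eq_of_mul_eq_one {n : Type*} [Fintype n] [DecidableEq n] {A B : Matrix n n R}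
    (h : A * B = 1) (hA : A.det = 1) : A.adjugate = B := by
  calc A.adjugate = A.adjugate * A * B := by rw [Matrix.mul_assoc, h, Matrix.mul_one]
    _ = B := by rw [adjugate_mul, hA, one_smul, Matrix.one_mul]

lemma det_submatrix_succAbove_eq_adjugate {n : ℕ} (A : Matrix (Fin (n + 1)) (Fin (n + 1)) R)
    (i j : Fin (n + 1)) :
    (A.submatrix i.succAbove j.succAbove).det = (-1) ^ ((i : ℕ) + j) * A.adjugate j i := by
  rw [adjugate_fin_succ_eq_det_submatrix, ← mul_assoc, ← pow_add, Even.neg_one_pow ⟨_, rfl⟩,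
    one_mul]

end CommRing

lemma M_eq_pascal_mul_transpose (n : ℕ) : M n = pascal ℤ n * (pascal ℤ n)ᵀ := by
  ext u v
  simp only [M, pascal, mul_apply, transpose_apply, of_apply]
  rw [Fin.sum_univ_eq_sum_range (fun k => ((u : ℕ).choose k : ℤ) * ((v : ℕ).choose k)),
    sum_range_choose_mul_choose _ u.isLt]

lemma adjugate_M (n : ℕ) : (M n).adjugate = (signedPascal ℤ n)ᵀ * signedPascal ℤ n := by
  rw [M_eq_pascal_mul_transpose, adjugate_mul_distrib, ← adjugate_transpose,
    adjugate_eq_of_mul_eq_one (pascal_mul_signedPascal n) (det_pascal n)]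

lemma det_M_submatrix_succAbove (n : ℕ) (i j : Fin (n + 1)) :
    ((M (n + 1)).submatrix i.succAbove j.succAbove).det =
      ∑ k : Fin (n + 1), ((k : ℕ).choose i : ℤ) * ((k : ℕ).choose j : ℤ) := by
  rw [det_submatrix_succAbove_eq_adjugate, adjugate_M, mul_apply, mul_sum]
  refine sum_congr rfl fun k _ => ?_
  have hsign :
      ((-1 : ℤ)) ^ ((i : ℕ) + j) * ((-1) ^ ((k : ℕ) + j) * (-1) ^ ((k : ℕ) + i)) = 1 := by
    rw [← pow_add, ← pow_add]
    exact Even.neg_one_pow ⟨i + j + k, by ring⟩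
  simp only [transpose_apply, signedPascal, of_apply]
  linear_combination ((k : ℕ).choose i : ℤ) * ((k : ℕ).choose j : ℤ) * hsign

/-- The minors of the binomial matrix satisfy
`Δ(n)_i^j = Δ(n-1)_i^j + (n-1).choose i * (n-1).choose j` for `0 ≤ i, j ≤ n - 2`
(here the matrix size `n` is `n+2`). -/
theorem minor_recursion (n : ℕ) (i j : Fin (n + 1)) :
    ((M (n + 2)).submatrix i.castSucc.succAbove j.castSucc.succAbove).det =
      ((M (n + 1)).submatrix i.succAbove j.succAbove).det +
        ((n + 1).choose (i : ℕ) : ℤ) * ((n + 1).choose (j : ℕ) : ℤ) := by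
  rw [det_M_submatrix_succAbove, det_M_submatrix_succAbove, Fin.sum_univ_castSucc]
  simp
end

section
/- For all n ≥ 1, 2·Σ_{j=0}^{n−1} Σ_{i=0}^{j−1} C(i)·C(j)·(n−j−1) + Σ_{j=0}^{n−1} C(j)^2·(n−j−1) = (4^{n−1} − 1)/3, where C(0) = 1 and C(k) = 2^{k−1} for k ≥ 1. -/
def C : ℕ → ℤ := fun k => if k = 0 then 1 else 2 ^ (k - 1)

/-!
Since `n - j - 1` counts the `m < n` with `j < m`, the left-hand side equals `∑_{m<n} P(m)²`, where
`P(m) = ∑_{j<m} C(j)` (the double sum and the diagonal sum together expand the square of `P(m)`).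
The partial sums telescope to `P(m) = 2^(m-1)` for `m ≥ 1` and `P(0) = 0`, so the left-hand side is
the geometric sum `∑_{k<n-1} 4^k = (4^(n-1) - 1) / 3`.
-/

open Finset

section

variable {R : Type*} [CommRing R]

theorem sum_range_mul_sub_sub_one (f : ℕ → R) (n : ℕ) :
    ∑ j ∈ range n, f j * ((n : R) - j - 1) = ∑ m ∈ range n, ∑ j ∈ range m, f j := by
  induction n with
  | zero => simp
  | succ n ih =>
    rw [sum_range_succ, sum_range_succ, ← ih, ← sum_add_distrib]
    push_cast
    rw [add_sub_cancel_left, sub_self, mul_zero, add_zero]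
    exact sum_congr rfl fun j _ => by ring

theorem sq_sum_range (a : ℕ → R) (n : ℕ) :
    (∑ j ∈ range n, a j) ^ 2 =
      2 * ∑ j ∈ range n, ∑ i ∈ range j, a i * a j + ∑ j ∈ range n, a j ^ 2 := by
  induction n with
  | zero => simp
  | succ n ih =>
    rw [sum_range_succ, sum_range_succ, sum_range_succ (fun j => a j ^ 2), ← sum_mul]
    linear_combination ih

end

theorem sum_range_succ_C (m : ℕ) : ∑ j ∈ range (m + 1), C j = 2 ^ m := by
  induction m with
  | zero => simp [C]
  | succ m ih =>
    rw [sum_range_succ, ih]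
    simp only [C, Nat.add_sub_cancel, Nat.add_one_ne_zero, if_false]
    ring

theorem three_mul_sum_range_sq_sum_C (n : ℕ) :
    3 * ∑ m ∈ range n, (∑ j ∈ range m, C j) ^ 2 = 4 ^ (n - 1) - 1 := by
  cases n with
  | zero => simp
  | succ n =>
    have hsq (k : ℕ) : (∑ j ∈ range (k + 1), C j) ^ 2 = 4 ^ k := by
      rw [sum_range_succ_C, ← pow_mul, pow_mul']
      norm_num
    rw [sum_range_succ', sum_congr rfl fun k _ => hsq k, Nat.add_sub_cancel, ← geom_sum_mul]
    simp only [range_zero, sum_empty]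
    ring

theorem hardin_path_sum_general (n : ℕ) :
    2 * (∑ j ∈ Finset.range n, ∑ i ∈ Finset.range j, C i * C j * ((n : ℤ) - j - 1)) +
        (∑ j ∈ Finset.range n, (C j) ^ 2 * ((n : ℤ) - j - 1)) =
      (4 ^ (n - 1) - 1) / 3 := by
  have hsum : 2 * (∑ j ∈ range n, ∑ i ∈ range j, C i * C j * ((n : ℤ) - j - 1)) +
      ∑ j ∈ range n, C j ^ 2 * ((n : ℤ) - j - 1) = ∑ m ∈ range n, (∑ j ∈ range m, C j) ^ 2 := by
    simp only [← sum_mul, sum_range_mul_sub_sub_one, sq_sum_range, mul_sum, ← sum_add_distrib]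
  rw [hsum, ← three_mul_sum_range_sq_sum_C, Int.mul_ediv_cancel_left _ three_ne_zero]

/-- `2 ∑_{j<n} ∑_{i<j} C(i) C(j) (n-j-1) + ∑_{j<n} C(j)² (n-j-1) = (4^(n-1) - 1)/3`. -/
theorem hardin_path_sum (n : ℕ) (hn : 1 ≤ n) :
    2 * (∑ j ∈ Finset.range n, ∑ i ∈ Finset.range j, C i * C j * ((n : ℤ) - j - 1)) +
        (∑ j ∈ Finset.range n, (C j) ^ 2 * ((n : ℤ) - j - 1)) =
      (4 ^ (n - 1) - 1) / 3 :=
  hardin_path_sum_general n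
end

section
/- Jacobi's identity on minors: for any n×n matrix A over a commutative ring, indices i_1 < ⋯ < i_r and j_1 < ⋯ < j_r in {0,…,n−1}, det(A)^{r−1} · det(A_{i_1,…,i_r}^{j_1,…,j_r}) = det(B), where B is the r×r matrix with entry B_{u,v} = det(A_{i_u}^{j_v}). -/
/-!
Index rows by `Fin r ⊕ Fin (m + 1 - r)` through `(i, gi)` and columns through `(j, gj)`. For a
block matrix `N` with `C = adjugate N`, the product `N * fromBlocks C₁₁ 0 C₂₁ 1` is block upper
triangular with diagonal blocks `det N • 1` and `N₂₂`, so `det N * det C₁₁ = det N ^ r * det N₂₂`;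
cancelling `det N` is legitimate for the generic matrix over `ℤ[X_pq]` and specialises to any `N`.
Reindexing multiplies the determinant and the adjugate by the sign of the shuffle
`τ : i u ↦ j u, gi k ↦ gj k`, which is `∏ u, (-1) ^ (i u + j u)`: exactly the signs that relate the
minors `det A_{i u}^{j v}` to the entries of `adjugate A`.
-/

open Equiv Equiv.Perm

theorem Function.bijective_sumElim_of_range_eq_compl {α β γ : Type*} {f : α → γ} {g : β → γ}
    (hf : Function.Injective f) (hg : Function.Injective g) (h : Set.range g = (Set.range f)ᶜ) :
    Function.Bijective (Sum.elim f g) :=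
  ⟨hf.sumElim hg fun a b hab => (h ▸ Set.mem_range_self b : g b ∈ (Set.range f)ᶜ) ⟨a, hab⟩, by
    rw [← Set.range_eq_univ, Set.Sum.elim_range, h, Set.union_compl_self]⟩

theorem Equiv.Perm.exists_succAbove_comm_and_sign_eq {m : ℕ} (τ : Perm (Fin (m + 1)))
    {a b : Fin (m + 1)} (hab : τ a = b) :
    ∃ τ' : Perm (Fin m), (∀ x, τ (a.succAbove x) = b.succAbove (τ' x)) ∧
      sign τ = (-1) ^ ((a : ℕ) + b) * sign τ' := by
  set ρ : Perm (Fin (m + 1)) := Fin.cycleRange b * τ * (Fin.cycleRange a)⁻¹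
  have hρ0 : ρ 0 = 0 := by
    simp [ρ, Perm.inv_def, (Fin.cycleRange a).symm_apply_eq.mpr (Fin.cycleRange_self a).symm, hab]
  have hρ : ρ = decomposeFin.symm (0, (decomposeFin ρ).2) := by
    have h0 : (decomposeFin ρ).1 = 0 := by
      rw [← hρ0, ← decomposeFin_symm_apply_zero (decomposeFin ρ).1 (decomposeFin ρ).2]
      simp
    rw [← h0]
    exact (decomposeFin.symm_apply_apply ρ).symm
  refine ⟨(decomposeFin ρ).2, fun x => (Fin.cycleRange b).injective ?_, ?_⟩
  · have h := congrArg (· x.succ) hρ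
    simp only [decomposeFin_symm_apply_succ, swap_self, refl_apply] at h
    rw [Fin.cycleRange_succAbove, ← h]
    simp [ρ, Perm.inv_def]
  · have h := congrArg sign hρ
    rw [decomposeFin.symm_sign, if_pos rfl, one_mul] at h
    rw [← h]
    have hsq : ∀ k : ℕ, ((-1 : ℤˣ) ^ k) * (-1) ^ k = 1 := fun k => by
      rw [← mul_pow, Int.units_mul_self, one_pow]
    simp only [ρ, map_mul, map_inv, Fin.sign_cycleRange, Int.units_inv_eq_self, pow_add]
    calc sign τ
        = ((-1) ^ (a : ℕ) * (-1) ^ (a : ℕ)) * (((-1) ^ (b : ℕ) * (-1) ^ (b : ℕ)) * sign τ) := by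
          rw [hsq, hsq, one_mul, one_mul]
      _ = _ := by ac_rfl

theorem StrictMono.exists_succAbove_eq_tail {r m : ℕ} {i : Fin (r + 1) → Fin (m + 1)}
    (hi : StrictMono i) :
    ∃ i' : Fin r → Fin m, StrictMono i' ∧
      ∀ u, (i 0).succAbove (i' u) = i u.succ ∧ (i u.succ : ℕ) = i' u + 1 := by
  have hpos : ∀ u : Fin r, i 0 < i u.succ := fun u => hi (Fin.succ_pos u)
  have hne : ∀ u : Fin r, i u.succ ≠ 0 := fun u => (Fin.zero_le _ |>.trans_lt (hpos u)).ne'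
  refine ⟨fun u => (i u.succ).pred (hne u), fun u v huv => ?_, fun u => ⟨?_, ?_⟩⟩
  · exact Fin.pred_lt_pred_iff.mpr (hi (Fin.succ_lt_succ_iff.mpr huv))
  · exact Fin.succAbove_pred_of_lt _ _ (hpos u)
  · have := Fin.pos_iff_ne_zero.mpr (hne u)
    simp only [Fin.val_pred]
    omega

theorem Equiv.Perm.sign_eq_prod_of_strictMono {r n : ℕ} {i j : Fin r → Fin n}
    (hi : StrictMono i) (hj : StrictMono j) {τ : Perm (Fin n)} (hτ : ∀ u, τ (i u) = j u)
    (hmono : MonotoneOn τ (Set.range i)ᶜ) :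
    sign τ = ∏ u, (-1) ^ ((i u : ℕ) + j u) := by
  induction r generalizing n with
  | zero =>
    rw [Set.range_eq_empty, Set.compl_empty, monotoneOn_univ] at hmono
    have hτ1 : τ = 1 := Equiv.ext <| congrFun (hmono.strictMono_of_injective τ.injective).eq_id
    simp [hτ1]
  | succ r ih =>
    obtain _ | m := n
    · exact (i 0).elim0
    obtain ⟨τ', hτ', hsign⟩ := τ.exists_succAbove_comm_and_sign_eq (hτ 0)
    obtain ⟨i', hi', hi'_eq⟩ := hi.exists_succAbove_eq_tail
    obtain ⟨j', hj', hj'_eq⟩ := hj.exists_succAbove_eq_tail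
    have hτ'_eq : ∀ u, τ' (i' u) = j' u := fun u => (j 0).succAbove_right_injective <| by
      rw [← hτ', (hi'_eq u).1, hτ, (hj'_eq u).1]
    have hsuccAbove_mem : ∀ x, x ∈ (Set.range i')ᶜ → (i 0).succAbove x ∈ (Set.range i)ᶜ := by
      rintro x hx ⟨w, hw⟩
      induction w using Fin.cases with
      | zero => exact Fin.succAbove_ne _ _ hw.symm
      | succ u => exact hx ⟨u, (i 0).succAbove_right_injective ((hi'_eq u).1.trans hw)⟩
    have hmono' : MonotoneOn τ' (Set.range i')ᶜ := fun x hx y hy hxy => by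
      have h := hmono (hsuccAbove_mem x hx) (hsuccAbove_mem y hy)
        ((Fin.strictMono_succAbove _).monotone hxy)
      rwa [hτ', hτ', (Fin.strictMono_succAbove _).le_iff_le] at h
    rw [hsign, ih hi' hj' hτ'_eq hmono', Fin.prod_univ_succ]
    congr 1
    refine Finset.prod_congr rfl fun u _ => ?_
    rw [(hi'_eq u).2, (hj'_eq u).2, show (i' u : ℕ) + 1 + (j' u + 1) = i' u + j' u + 2 by ring,
      pow_add _ _ 2, neg_one_sq, mul_one]

namespace Matrix

variable {ι κ m n R : Type*} [Fintype ι] [Fintype κ] [DecidableEq ι] [DecidableEq κ]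
  [Fintype m] [Fintype n] [DecidableEq m] [DecidableEq n] [CommRing R]

theorem det_submatrix_equiv (A : Matrix n n R) (e f : m ≃ n) :
    (A.submatrix e f).det = sign (e.symm.trans f) * A.det := by
  have h : A.submatrix e f = (A.submatrix e e).submatrix id (f.trans e.symm) := by
    ext x y; simp
  have hσ : (e.trans (e.symm.trans f)).trans e.symm = f.trans e.symm := by
    ext; simp
  rw [h, det_permute', det_submatrix_equiv_self, ← hσ, sign_trans_trans_symm]

theorem adjugate_submatrix_equiv (A : Matrix n n R) (e f : m ≃ n) :
    adjugate (A.submatrix e f) = (sign (e.symm.trans f) : R) • (adjugate A).submatrix f e := by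
  ext x y
  rw [adjugate_apply, updateRow_submatrix_equiv, det_submatrix_equiv, smul_apply, submatrix_apply,
    adjugate_apply, smul_eq_mul]
  congr 4
  ext k
  simp [Pi.single_apply, f.symm_apply_eq]

theorem det_mul_det_toBlocks₁₁_adjugate (N : Matrix (ι ⊕ κ) (ι ⊕ κ) R) :
    N.det * (adjugate N).toBlocks₁₁.det = N.det ^ Fintype.card ι * N.toBlocks₂₂.det := by
  set M := fromBlocks (adjugate N).toBlocks₁₁ 0 (adjugate N).toBlocks₂₁ (1 : Matrix κ κ R)
  have hM : N * M = fromBlocks (N.det • 1) N.toBlocks₁₂ 0 N.toBlocks₂₂ := by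
    have hinl : ∀ z y, (N * M) z (.inl y) = (N * adjugate N) z (.inl y) := fun z y => by
      simp only [mul_apply]
      congr! 2 with w
      cases w <;> rfl
    have hinr : ∀ z y, (N * M) z (.inr y) = (N * (1 : Matrix (ι ⊕ κ) (ι ⊕ κ) R)) z (.inr y) :=
        fun z y => by
      simp only [mul_apply]
      congr! 2 with w
      cases w <;> simp [M, one_apply]
    ext (x | x) (y | y) <;> simp [hinl, hinr, mul_adjugate, one_apply, toBlocks₁₂, toBlocks₂₂]
  have h := congrArg det hM
  rwa [det_mul, det_fromBlocks_zero₁₂, det_fromBlocks_zero₂₁, det_one, mul_one, det_smul, det_one,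
    mul_one] at h

theorem det_toBlocks₁₁_adjugate [Nonempty ι] (N : Matrix (ι ⊕ κ) (ι ⊕ κ) R) :
    (adjugate N).toBlocks₁₁.det = N.det ^ (Fintype.card ι - 1) * N.toBlocks₂₂.det := by
  set X := mvPolynomialX (ι ⊕ κ) (ι ⊕ κ) ℤ
  suffices hX : (adjugate X).toBlocks₁₁.det = X.det ^ (Fintype.card ι - 1) * X.toBlocks₂₂.det by
    set φ := MvPolynomial.aeval (R := ℤ) fun p : (ι ⊕ κ) × (ι ⊕ κ) => N p.1 p.2
    have h := congrArg φ hX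
    rw [map_mul, map_pow, AlgHom.map_det, AlgHom.map_det, AlgHom.map_det] at h
    rwa [← mvPolynomialX_mapMatrix_aeval ℤ N, ← AlgHom.map_adjugate]
  apply mul_left_cancel₀ (det_mvPolynomialX_ne_zero (ι ⊕ κ) ℤ)
  rw [det_mul_det_toBlocks₁₁_adjugate, ← mul_assoc, ← pow_succ',
    Nat.sub_add_cancel Fintype.card_pos]

theorem sign_mul_det_submatrix_adjugate [Nonempty ι] (A : Matrix n n R) (e f : ι ⊕ κ ≃ n) :
    (sign (e.symm.trans f) : R) * ((adjugate A).submatrix (f ∘ Sum.inl) (e ∘ Sum.inl)).det =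
      A.det ^ (Fintype.card ι - 1) * (A.submatrix (e ∘ Sum.inr) (f ∘ Sum.inr)).det := by
  set s : R := (sign (e.symm.trans f) : R)
  have hs : s * s = 1 := by
    simp only [s, ← Int.cast_mul, ← Units.val_mul, Int.units_mul_self, Units.val_one, Int.cast_one]
  have h := det_toBlocks₁₁_adjugate (A.submatrix e f)
  rw [adjugate_submatrix_equiv, det_submatrix_equiv] at h
  obtain ⟨k, hk⟩ : ∃ k, Fintype.card ι = k + 1 :=
    Nat.exists_eq_succ_of_ne_zero Fintype.card_ne_zero
  have hs' : s ^ k * s ^ k = 1 := by rw [← mul_pow, hs, one_pow]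
  change (s • ((adjugate A).submatrix (f ∘ Sum.inl) (e ∘ Sum.inl))).det =
    (s * A.det) ^ _ * (A.submatrix (e ∘ Sum.inr) (f ∘ Sum.inr)).det at h
  rw [det_smul, hk, Nat.add_sub_cancel, mul_pow] at h
  rw [hk, Nat.add_sub_cancel]
  linear_combination s ^ k * h - (s * ((adjugate A).submatrix (f ∘ Sum.inl) (e ∘ Sum.inl)).det -
    A.det ^ k * (A.submatrix (e ∘ Sum.inr) (f ∘ Sum.inr)).det) * hs'

theorem det_submatrix_succAbove_eq_adjugate {m : ℕ} (A : Matrix (Fin (m + 1)) (Fin (m + 1)) R)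
    (i j : Fin (m + 1)) :
    (A.submatrix i.succAbove j.succAbove).det = (-1) ^ ((i : ℕ) + j) * adjugate A j i := by
  rw [adjugate_fin_succ_eq_det_submatrix, ← mul_assoc, ← pow_add, Even.neg_one_pow ⟨_, rfl⟩,
    one_mul]

theorem det_of_det_submatrix_succAbove {m r : ℕ} (A : Matrix (Fin (m + 1)) (Fin (m + 1)) R)
    (i j : Fin r → Fin (m + 1)) :
    (of fun u v => (A.submatrix (i u).succAbove (j v).succAbove).det).det =
      (∏ u, (-1) ^ ((i u : ℕ) + j u)) * ((adjugate A).submatrix j i).det := by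
  calc _ = (of fun u v => (-1) ^ (i u : ℕ) *
          (of fun u v => (-1) ^ (j v : ℕ) * ((adjugate A).submatrix j i)ᵀ u v) u v).det := by
        congr 1
        ext u v
        simp [det_submatrix_succAbove_eq_adjugate, pow_add, mul_assoc]
    _ = (∏ u, (-1) ^ (i u : ℕ)) *
          ((∏ v, (-1) ^ (j v : ℕ)) * ((adjugate A).submatrix j i)ᵀ.det) := by
        rw [det_mul_column, det_mul_row]
    _ = _ := by
        rw [det_transpose, ← mul_assoc, ← Finset.prod_mul_distrib]
        simp only [pow_add]

end Matrix

theorem jacobi_identity_general {R : Type*} [CommRing R] (m r : ℕ) (hr : 1 ≤ r)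
    (A : Matrix (Fin (m + 1)) (Fin (m + 1)) R)
    (i j : Fin r → Fin (m + 1)) (hi : StrictMono i) (hj : StrictMono j)
    (gi gj : Fin (m + 1 - r) → Fin (m + 1)) (hgi : StrictMono gi) (hgj : StrictMono gj)
    (hgi' : Set.range gi = (Set.range i)ᶜ) (hgj' : Set.range gj = (Set.range j)ᶜ) :
    A.det ^ (r - 1) * (A.submatrix gi gj).det =
      (Matrix.of fun u v : Fin r =>
        (A.submatrix (i u).succAbove (j v).succAbove).det).det := by
  have : Nonempty (Fin r) := ⟨⟨0, hr⟩⟩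
  let e := Equiv.ofBijective _
    (Function.bijective_sumElim_of_range_eq_compl hi.injective hgi.injective hgi')
  let f := Equiv.ofBijective _
    (Function.bijective_sumElim_of_range_eq_compl hj.injective hgj.injective hgj')
  have hτi : ∀ u, (e.symm.trans f) (i u) = j u := fun u => by
    have h : e.symm (i u) = .inl u := e.symm_apply_eq.mpr rfl
    simp [h, f]
  have hτgi : ∀ k, (e.symm.trans f) (gi k) = gj k := fun k => by
    have h : e.symm (gi k) = .inr k := e.symm_apply_eq.mpr rfl
    simp [h, f]
  have hmono : MonotoneOn (e.symm.trans f) (Set.range i)ᶜ := by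
    rw [← hgi']
    rintro _ ⟨k, rfl⟩ _ ⟨l, rfl⟩ hkl
    rw [hτgi, hτgi]
    exact hgj.monotone (hgi.le_iff_le.mp hkl)
  have hjacobi := Matrix.sign_mul_det_submatrix_adjugate A e f
  rw [Equiv.Perm.sign_eq_prod_of_strictMono hi hj hτi hmono, Fintype.card_fin] at hjacobi
  rw [Matrix.det_of_det_submatrix_succAbove]
  push_cast at hjacobi
  exact hjacobi.symm

/-- Jacobi's identity on minors: for an `(m+1) × (m+1)` matrix `A` over a commutative
ring, strictly increasing row indices `i : Fin r → Fin (m+1)` and column indices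
`j : Fin r → Fin (m+1)` with `1 ≤ r ≤ m+1`, and strictly increasing enumerations
`gi, gj` of the complementary rows and columns,
`det A ^ (r-1) * det A_{i₁,…,i_r}^{j₁,…,j_r} = det B`, where `B` is the `r × r`
matrix with entry `B u v = det A_{i u}^{j v}`. -/
theorem jacobi_identity {R : Type*} [CommRing R] (m r : ℕ) (hr : 1 ≤ r) (hrm : r ≤ m + 1)
    (A : Matrix (Fin (m + 1)) (Fin (m + 1)) R)
    (i j : Fin r → Fin (m + 1)) (hi : StrictMono i) (hj : StrictMono j)
    (gi gj : Fin (m + 1 - r) → Fin (m + 1)) (hgi : StrictMono gi) (hgj : StrictMono gj)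
    (hgi' : Set.range gi = (Set.range i)ᶜ) (hgj' : Set.range gj = (Set.range j)ᶜ) :
    A.det ^ (r - 1) * (A.submatrix gi gj).det =
      (Matrix.of fun u v : Fin r =>
        (A.submatrix (i u).succAbove (j v).succAbove).det).det :=
  jacobi_identity_general m r hr A i j hi hj gi gj hgi hgj hgi' hgj'
end
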